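/- arXiv:1311.4856 — 2 statements merged into one kernel-verified Lean document; each statement's English description precedes it below -/
import Mathlib

section
/- For every p ≥ 1 there exists a constant C > 0 (depending only on p and N) such that for every nonnegative function φ ∈ C_c^∞(ℝ^N), ∫_{ℝ^N} |∇φ|^{2p}/(1 + φ)^{2p} ≤ C ∫_{ℝ^N} |D²φ|^p/(1 + φ)^p, where D²φ denotes the Hessian matrix of φ and |D²φ| its norm. -/
open MeasureTheory Filter Metric
open scoped ENNReal Topology

open Set
open scoped RealInnerProductSpace

noncomputable section

lemma young_aux {p : ℝ} (hp : 1 ≤ p) {ε : ℝ} (hε : 0 < ε) :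
    ∃ K > 0, ∀ X Y : ℝ, 0 ≤ X → 0 ≤ Y →
      X ^ (2 * p - 2) * Y ≤ ε * X ^ (2 * p) + K * Y ^ p := by
  rcases eq_or_lt_of_le hp with rfl | hp1
  · refine ⟨1, one_pos, fun X Y hX hY => ?_⟩
    have : (2 * (1:ℝ) - 2) = 0 := by norm_num
    rw [this, Real.rpow_zero, one_mul, Real.rpow_one, one_mul]
    nlinarith [Real.rpow_nonneg hX (2 * (1:ℝ)), hε.le]
  · have hp0 : 0 < p := lt_of_lt_of_le one_pos hp
    have hp1' : 0 < p - 1 := by linarith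
    set t : ℝ := ε * p / (p - 1) with ht
    have htpos : 0 < t := by positivity
    refine ⟨t ^ (1 - p) / p, by positivity, fun X Y hX hY => ?_⟩
    have w1 : (0:ℝ) ≤ (p - 1) / p := by positivity
    have w2 : (0:ℝ) ≤ 1 / p := by positivity
    have hw : (p - 1) / p + 1 / p = 1 := by field_simp; ring
    have h1 : (0:ℝ) ≤ t * X ^ (2 * p) := by positivity
    have h2 : (0:ℝ) ≤ t ^ (1 - p) * Y ^ p := by positivity
    have key := Real.geom_mean_le_arith_mean2_weighted w1 w2 h1 h2 hw
    have e1 : (t * X ^ (2 * p)) ^ ((p - 1) / p)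
        = t ^ ((p - 1) / p) * X ^ (2 * p - 2) := by
      rw [Real.mul_rpow htpos.le (Real.rpow_nonneg hX _), ← Real.rpow_mul hX]
      congr 2
      field_simp
    have e2 : (t ^ (1 - p) * Y ^ p) ^ (1 / p)
        = t ^ ((1 - p) / p) * Y := by
      rw [Real.mul_rpow (Real.rpow_nonneg htpos.le _) (Real.rpow_nonneg hY _),
        ← Real.rpow_mul htpos.le, ← Real.rpow_mul hY]
      rw [mul_one_div, mul_one_div, div_self hp0.ne', Real.rpow_one]
    have e3 : t ^ ((p - 1) / p) * t ^ ((1 - p) / p) = 1 := by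
      rw [← Real.rpow_add htpos]
      have : (p - 1) / p + (1 - p) / p = 0 := by field_simp; ring
      rw [this, Real.rpow_zero]
    have lhs_eq : X ^ (2 * p - 2) * Y
        = (t * X ^ (2 * p)) ^ ((p - 1) / p) * (t ^ (1 - p) * Y ^ p) ^ (1 / p) := by
      rw [e1, e2]
      have : t ^ ((p - 1) / p) * X ^ (2 * p - 2) * (t ^ ((1 - p) / p) * Y)
          = (t ^ ((p - 1) / p) * t ^ ((1 - p) / p)) * (X ^ (2 * p - 2) * Y) := by ring
      rw [this, e3, one_mul]
    rw [lhs_eq]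
    refine key.trans (le_of_eq ?_)
    have hε' : (p - 1) / p * t = ε := by
      rw [ht]; field_simp
    calc (p - 1) / p * (t * X ^ (2 * p)) + 1 / p * (t ^ (1 - p) * Y ^ p)
        = ((p - 1) / p * t) * X ^ (2 * p) + (t ^ (1 - p) / p) * Y ^ p := by ring
      _ = ε * X ^ (2 * p) + t ^ (1 - p) / p * Y ^ p := by rw [hε']

variable {E : Type*} [NormedAddCommGroup E] [InnerProductSpace ℝ E]

/-- Derivative of `v ↦ ‖v‖^a • v`. -/
def Dh (a : ℝ) (v : E) : E →L[ℝ] E :=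
  (a * ‖v‖ ^ (a - 2)) • (innerSL ℝ v).smulRight v
    + ‖v‖ ^ a • ContinuousLinearMap.id ℝ E

lemma Dh_apply (a : ℝ) (v w : E) :
    Dh a v w = (a * ‖v‖ ^ (a - 2) * ⟪v, w⟫) • v + ‖v‖ ^ a • w := by
  simp [Dh, ContinuousLinearMap.smulRight_apply, smul_smul]

lemma Dh_zero_of_pos {a : ℝ} (ha : 0 < a) : Dh a (0 : E) = 0 := by
  ext w
  rw [Dh_apply]
  simp [Real.zero_rpow ha.ne']

lemma norm_Dh_apply_le {a : ℝ} (ha : 0 ≤ a) (v w : E) :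
    ‖Dh a v w‖ ≤ (1 + a) * ‖v‖ ^ a * ‖w‖ := by
  rw [Dh_apply]
  refine (norm_add_le _ _).trans ?_
  rw [norm_smul, norm_smul, Real.norm_eq_abs, Real.norm_eq_abs]
  rcases eq_or_ne v 0 with rfl | hv
  · simp only [inner_zero_left, mul_zero, abs_zero, norm_zero, zero_mul, zero_add]
    rw [abs_of_nonneg (Real.rpow_nonneg (le_refl (0:ℝ)) a)]
    have h1 : (1:ℝ) ≤ 1 + a := by linarith
    nlinarith [Real.rpow_nonneg (le_refl (0:ℝ)) a, norm_nonneg w,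
      mul_nonneg (Real.rpow_nonneg (le_refl (0:ℝ)) a) (norm_nonneg w)]
  · have hvn : (0:ℝ) < ‖v‖ := norm_pos_iff.2 hv
    have key : ‖v‖ ^ (a - 2) * ‖v‖ * ‖v‖ = ‖v‖ ^ a := by
      have h2 : ‖v‖ ^ ((2:ℕ):ℝ) = ‖v‖ * ‖v‖ := by
        rw [Real.rpow_natCast]; ring
      rw [mul_assoc, ← h2, ← Real.rpow_add hvn]
      norm_num
    have hip : |⟪v, w⟫| ≤ ‖v‖ * ‖w‖ := abs_real_inner_le_norm v w
    have h1 : |a * ‖v‖ ^ (a - 2) * ⟪v, w⟫| * ‖v‖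
        ≤ a * ‖v‖ ^ a * ‖w‖ := by
      rw [abs_mul, abs_mul, abs_of_nonneg ha,
        abs_of_nonneg (Real.rpow_nonneg (norm_nonneg _) _)]
      calc a * ‖v‖ ^ (a - 2) * |⟪v, w⟫| * ‖v‖
          ≤ a * ‖v‖ ^ (a - 2) * (‖v‖ * ‖w‖) * ‖v‖ := by
            have h0 := mul_nonneg ha (Real.rpow_nonneg (norm_nonneg v) (a - 2))
            gcongr
        _ = a * (‖v‖ ^ (a - 2) * ‖v‖ * ‖v‖) * ‖w‖ := by ring
        _ = a * ‖v‖ ^ a * ‖w‖ := by rw [key]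
    have h2 : |‖v‖ ^ a| * ‖w‖ = ‖v‖ ^ a * ‖w‖ := by
      rw [abs_of_nonneg (Real.rpow_nonneg (norm_nonneg _) _)]
    nlinarith [h1, h2.le, h2.ge]

lemma hasFDerivAt_normPow_smul {a : ℝ} (ha : 0 ≤ a) (v : E) :
    HasFDerivAt (fun w : E => ‖w‖ ^ a • w) (Dh a v) v := by
  rcases eq_or_lt_of_le ha with rfl | ha0
  · have hfun : (fun w : E => ‖w‖ ^ (0:ℝ) • w) = fun w => w := by
      funext w; rw [Real.rpow_zero, one_smul]
    have hD : Dh (0:ℝ) v = ContinuousLinearMap.id ℝ E := by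
      ext w; rw [Dh_apply]; simp
    rw [hfun, hD]
    exact hasFDerivAt_id v
  rcases eq_or_ne v 0 with rfl | hv
  · -- at `v = 0`, the derivative is `0`
    rw [Dh_zero_of_pos ha0]
    rw [hasFDerivAt_iff_isLittleO_nhds_zero]
    simp only [norm_zero, Real.zero_rpow ha0.ne', zero_smul, zero_add,
      ContinuousLinearMap.zero_apply, sub_zero]
    rw [Asymptotics.isLittleO_iff]
    intro c hc
    have htend : Filter.Tendsto (fun h : E => ‖h‖ ^ a) (𝓝 0) (𝓝 0) := by
      have h1 : Filter.Tendsto (fun h : E => ‖h‖) (𝓝 0) (𝓝 0) := by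
        simpa using continuous_norm.tendsto (0 : E)
      have h2 : ContinuousAt (fun x : ℝ => x ^ a) 0 :=
        Real.continuousAt_rpow_const 0 a (Or.inr ha)
      have := h2.tendsto.comp h1
      simpa [Function.comp_def, Real.zero_rpow ha0.ne'] using this
    filter_upwards [htend (Iio_mem_nhds hc)] with h hh
    rw [norm_smul, Real.norm_eq_abs, abs_of_nonneg (Real.rpow_nonneg (norm_nonneg _) _)]
    exact mul_le_mul_of_nonneg_right (le_of_lt hh) (norm_nonneg h)
  · -- at `v ≠ 0`
    have hvn : (0:ℝ) < ‖v‖ := norm_pos_iff.2 hv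
    have hq : HasFDerivAt (fun w : E => ⟪w, w⟫) ((2:ℝ) • innerSL ℝ v) v := by
      have := (hasFDerivAt_id v).inner ℝ (hasFDerivAt_id v)
      refine this.congr_fderiv ?_
      ext w
      simp [fderivInnerCLM_apply, real_inner_comm, two_mul]
    have hqv : ⟪v, v⟫ = ‖v‖ * ‖v‖ := real_inner_self_eq_norm_mul_norm v
    have hqvne : ⟪v, v⟫ ≠ 0 := by rw [hqv]; positivity
    have hr : HasDerivAt (fun x : ℝ => x ^ (a/2)) ((a/2) * ⟪v, v⟫ ^ (a/2 - 1)) ⟪v, v⟫ :=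
      Real.hasDerivAt_rpow_const (Or.inl hqvne)
    have hs : HasFDerivAt (fun w : E => ⟪w, w⟫ ^ (a/2))
        (((a/2) * ⟪v, v⟫ ^ (a/2 - 1)) • ((2:ℝ) • innerSL ℝ v)) v :=
      HasDerivAt.comp_hasFDerivAt (f := fun w : E => (⟪w, w⟫ : ℝ)) v hr hq
    have hfun : (fun w : E => ⟪w, w⟫ ^ (a/2)) = fun w : E => ‖w‖ ^ a := by
      funext w
      rw [real_inner_self_eq_norm_mul_norm]
      have : (‖w‖ * ‖w‖ : ℝ) = ‖w‖ ^ ((2:ℕ):ℝ) := by rw [Real.rpow_natCast]; ring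
      rw [this, ← Real.rpow_mul (norm_nonneg w)]
      congr 1
      push_cast
      ring
    have hs' : HasFDerivAt (fun w : E => ‖w‖ ^ a)
        ((a * ‖v‖ ^ (a - 2)) • innerSL ℝ v) v := by
      rw [← hfun]
      convert hs using 1
      rw [smul_smul]
      congr 1
      rw [hqv]
      have h1 : (‖v‖ * ‖v‖ : ℝ) = ‖v‖ ^ ((2:ℕ):ℝ) := by rw [Real.rpow_natCast]; ring
      rw [h1, ← Real.rpow_mul (norm_nonneg v)]
      rw [show ((2:ℕ):ℝ) * (a/2 - 1) = a - 2 by push_cast; ring]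
      ring
    have := hs'.smul (hasFDerivAt_id v)
    convert this using 1
    · rfl
    ext w
    rw [Dh_apply]
    simp [ContinuousLinearMap.smulRight_apply, smul_smul]
    abel

lemma coord_abs_le_norm {N : ℕ} (v : EuclideanSpace ℝ (Fin N)) (i : Fin N) :
    |v i| ≤ ‖v‖ := by
  have h : v i = @inner ℝ _ _ v (EuclideanSpace.single i (1:ℝ)) := by
    rw [EuclideanSpace.inner_single_right]
    simp
  rw [h]
  refine (abs_real_inner_le_norm _ _).trans ?_
  rw [EuclideanSpace.norm_single]
  simp

/-- Integration by parts / divergence theorem for compactly supported, everywhere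
differentiable vector fields on Euclidean space. -/
lemma integral_divergence_eq_zero {N : ℕ}
    (W : EuclideanSpace ℝ (Fin N) → EuclideanSpace ℝ (Fin N))
    (W' : EuclideanSpace ℝ (Fin N) → EuclideanSpace ℝ (Fin N) →L[ℝ] EuclideanSpace ℝ (Fin N))
    (hd : ∀ x, HasFDerivAt W (W' x) x) (hc : HasCompactSupport W)
    (hi : Integrable (fun x => ∑ i, W' x (EuclideanSpace.single i 1) i)) :
    ∫ x, ∑ i, W' x (EuclideanSpace.single i 1) i = 0 := by
  rcases N with _ | n
  · simp
  -- choose a bound for the support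
  obtain ⟨R, hR⟩ := (Metric.isBounded_iff_subset_closedBall
    (0 : EuclideanSpace ℝ (Fin (n+1)))).mp hc.isCompact.isBounded
  have hsupp : ∀ x : EuclideanSpace ℝ (Fin (n+1)), R < ‖x‖ → x ∉ tsupport W := by
    intro x hx hmem
    have := hR hmem
    rw [mem_closedBall, dist_zero_right] at this
    linarith
  have hW'zero : ∀ x : EuclideanSpace ℝ (Fin (n+1)), x ∉ tsupport W → W' x = 0 := by
    intro x hx
    have h1 : W' x = fderiv ℝ W x := (hd x).fderiv.symm
    rw [h1]
    exact fderiv_of_notMem_tsupport ℝ hx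
  have hWzero : ∀ x : EuclideanSpace ℝ (Fin (n+1)), x ∉ tsupport W → W x = 0 := by
    intro x hx
    exact image_eq_zero_of_notMem_tsupport hx
  set κ := EuclideanSpace.equiv (Fin (n+1)) ℝ with hκ
  set divE : EuclideanSpace ℝ (Fin (n+1)) → ℝ :=
    fun x => ∑ i, W' x (EuclideanSpace.single i 1) i with hdivE
  -- transfer to `Fin (n+1) → ℝ`
  have hmp : MeasurePreserving (MeasurableEquiv.toLp 2 (Fin (n+1) → ℝ)) :=
    (EuclideanSpace.volume_preserving_symm_measurableEquiv_toLp (Fin (n+1))).symm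
  have step1 : ∫ x, divE x
      = ∫ y : Fin (n+1) → ℝ, divE ((MeasurableEquiv.toLp 2 (Fin (n+1) → ℝ)) y) :=
    (hmp.integral_comp' divE).symm
  -- the box
  set a : Fin (n+1) → ℝ := fun _ => -(|R|+1) with ha
  set b : Fin (n+1) → ℝ := fun _ => |R|+1 with hb
  have hle : a ≤ b := by
    intro i; simp only [ha, hb]
    have := abs_nonneg R
    linarith
  set f : Fin (n+1) → (Fin (n+1) → ℝ) → ℝ :=
    fun i y => W (κ.symm y) i with hf
  set f' : Fin (n+1) → (Fin (n+1) → ℝ) → (Fin (n+1) → ℝ) →L[ℝ] ℝ :=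
    fun i y => (EuclideanSpace.proj i) ∘L ((W' (κ.symm y)) ∘L
      (κ.symm : (Fin (n+1) → ℝ) →L[ℝ] EuclideanSpace ℝ (Fin (n+1)))) with hf'
  have hdf : ∀ y, ∀ i, HasFDerivAt (f i) (f' i y) y := by
    intro y i
    have h1 : HasFDerivAt (fun y : Fin (n+1) → ℝ => W (κ.symm y))
        ((W' (κ.symm y)) ∘L (κ.symm : (Fin (n+1) → ℝ) →L[ℝ] _)) y :=
      (hd (κ.symm y)).comp y (κ.symm.hasFDerivAt)
    exact ((EuclideanSpace.proj i).hasFDerivAt).comp y h1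
  have hWcont : Continuous W := by
    rw [continuous_iff_continuousAt]; exact fun x => (hd x).continuousAt
  have key := MeasureTheory.integral_divergence_of_hasFDerivAt_off_countable'
    a b hle f f' ∅ countable_empty
    (fun i => (((EuclideanSpace.proj i).continuous.comp
      (hWcont.comp κ.symm.continuous)).continuousOn))
    (fun x _ i => hdf x i)
    (by
      -- integrability of the divergence on the box
      have h2 : Integrable (divE ∘ (MeasurableEquiv.toLp 2 (Fin (n+1) → ℝ))) :=
        (hmp.integrable_comp_emb
          (MeasurableEquiv.toLp 2 (Fin (n+1) → ℝ)).measurableEmbedding).2 hi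
      apply Integrable.integrableOn
      exact h2)
  -- the faces vanish
  have hface : ∀ (i : Fin (n+1)) (c : ℝ), |c| = |R|+1 →
      ∀ x : Fin n → ℝ, f i (i.insertNth c x) = 0 := by
    intro i c hcabs x
    have hcoord : κ.symm (i.insertNth c x) i = c := by
      simp [hκ]
    have h1 : |(κ.symm (i.insertNth c x)) i| = |R|+1 := by
      rw [hcoord, hcabs]
    have h2 : R < ‖(κ.symm (i.insertNth c x) : EuclideanSpace ℝ (Fin (n+1)))‖ := by
      have := coord_abs_le_norm (κ.symm (i.insertNth c x)) i
      rw [h1] at this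
      have hRa : R ≤ |R| := le_abs_self R
      linarith
    simp only [hf]
    rw [hWzero _ (hsupp _ h2)]
    rfl
  rw [step1]
  have step2 : (fun y : Fin (n+1) → ℝ =>
        divE ((MeasurableEquiv.toLp 2 (Fin (n+1) → ℝ)) y))
      = fun y => ∑ i, f' i y (Pi.single i 1) := by
    funext y
    simp only [hdivE, hf', ContinuousLinearMap.comp_apply]
    rfl
  rw [step2]
  have step3 : ∫ y : Fin (n+1) → ℝ, ∑ i, f' i y (Pi.single i 1)
      = ∫ y in Icc a b, ∑ i, f' i y (Pi.single i 1) := by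
    refine (setIntegral_eq_integral_of_forall_compl_eq_zero ?_).symm
    intro y hy
    -- y outside the box: some coordinate is out of [-(|R|+1), |R|+1]
    have : ∃ j, ¬ (a j ≤ y j ∧ y j ≤ b j) := by
      by_contra hcon
      push_neg at hcon
      exact hy ⟨fun j => (hcon j).1, fun j => (hcon j).2⟩
    obtain ⟨j, hj⟩ := this
    have hyj : |R| + 1 < |y j| := by
      simp only [ha, hb] at hj
      rcases not_and_or.mp hj with h | h
      · push_neg at h
        calc |R| + 1 < -(y j) := by linarith
          _ ≤ |y j| := neg_le_abs _
      · push_neg at h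
        calc |R| + 1 < y j := h
          _ ≤ |y j| := le_abs_self _
    have h2 : R < ‖(κ.symm y : EuclideanSpace ℝ (Fin (n+1)))‖ := by
      have hcc := coord_abs_le_norm (κ.symm y) j
      rw [show |(κ.symm y) j| = |y j| from rfl] at hcc
      have hRa : R ≤ |R| := le_abs_self R
      linarith
    have hx : (κ.symm y : EuclideanSpace ℝ (Fin (n+1))) ∉ tsupport W := hsupp _ h2
    simp only [hf', ContinuousLinearMap.comp_apply]
    have := hW'zero _ hx
    simp [this]
  rw [step3, key]
  apply Finset.sum_eq_zero
  intro i _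
  have e1 : ∀ x : Fin n → ℝ, f i (i.insertNth (b i) x) = 0 :=
    fun x => hface i (b i) (by simp [hb]; positivity) x
  have e2 : ∀ x : Fin n → ℝ, f i (i.insertNth (a i) x) = 0 := by
    intro x
    refine hface i (a i) ?_ x
    have : a i = -(|R|+1) := rfl
    rw [this, abs_neg, abs_of_nonneg (by positivity)]
  simp only [e1, e2, integral_zero, sub_zero]

variable {N : ℕ}

set_option maxHeartbeats 1000000 in
/-- **A variant of Maz'ya's inequality** (Lemma 6.2). For every `p ≥ 1` there exists
`C > 0`, depending only on `p` and `N`, such that for every nonnegative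
`φ ∈ C_c^∞(ℝ^N)`,
`∫ |∇φ|^{2p}/(1+φ)^{2p} ≤ C ∫ |D²φ|^p/(1+φ)^p`. -/
theorem mazya_variant (p : ℝ) (hp : 1 ≤ p) :
    ∃ C > 0, ∀ φ : EuclideanSpace ℝ (Fin N) → ℝ,
      ContDiff ℝ (⊤ : ℕ∞) φ → HasCompactSupport φ → (∀ x, 0 ≤ φ x) →
      ∫ x, ‖gradient φ x‖ ^ (2 * p) / (1 + φ x) ^ (2 * p) ≤
        C * ∫ x, ‖iteratedFDeriv ℝ 2 φ x‖ ^ p / (1 + φ x) ^ p := by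
  have ha : (0:ℝ) ≤ 2 * p - 2 := by linarith
  have hq : (0:ℝ) < 2 * p - 1 := by linarith
  set a : ℝ := 2 * p - 2 with ha_def
  set q : ℝ := 2 * p - 1 with hq_def
  set c₁ : ℝ := (N + 1) * (1 + a) with hc₁_def
  have hc₁pos : 0 < c₁ := by positivity
  have hεpos : 0 < q / (2 * c₁) := by positivity
  obtain ⟨K, hKpos, hK⟩ := young_aux hp hεpos
  refine ⟨2 * c₁ * K / q, by positivity, fun φ hφ hφc hφ0 => ?_⟩
  set g : EuclideanSpace ℝ (Fin N) → EuclideanSpace ℝ (Fin N) := gradient φ with hg_def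
  set Hn : EuclideanSpace ℝ (Fin N) → ℝ := fun x => ‖iteratedFDeriv ℝ 2 φ x‖ with hHn_def
  have hu : ∀ x, 0 < 1 + φ x := fun x => by linarith [hφ0 x]
  -- basic smoothness facts
  have hφ1 : Differentiable ℝ φ := hφ.differentiable (by simp)
  have hφ' : ContDiff ℝ (⊤ : ℕ∞) (fderiv ℝ φ) := hφ.fderiv_right (by simp)
  have hφ'd : Differentiable ℝ (fderiv ℝ φ) := hφ'.differentiable (by simp)
  -- the gradient as a composition with an isometry
  set ℓ : (EuclideanSpace ℝ (Fin N) →L[ℝ] ℝ) ≃L[ℝ] EuclideanSpace ℝ (Fin N) :=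
    (InnerProductSpace.toDual ℝ (EuclideanSpace ℝ (Fin N))).symm.toContinuousLinearEquiv
    with hℓ_def
  have hg_eq : g = fun y => ℓ (fderiv ℝ φ y) := rfl
  have hg_inner : ∀ x w, ⟪g x, w⟫ = fderiv ℝ φ x w := fun x w =>
    InnerProductSpace.toDual_symm_apply
  set G' : EuclideanSpace ℝ (Fin N) →
      (EuclideanSpace ℝ (Fin N) →L[ℝ] EuclideanSpace ℝ (Fin N)) :=
    fun x => (ℓ : (EuclideanSpace ℝ (Fin N) →L[ℝ] ℝ) →L[ℝ] EuclideanSpace ℝ (Fin N)) ∘L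
      fderiv ℝ (fderiv ℝ φ) x with hG'_def
  have hgd : ∀ x, HasFDerivAt g (G' x) x := by
    intro x
    exact (ℓ.hasFDerivAt).comp x (hφ'd x).hasFDerivAt
  have hn2 : ∀ x, ‖fderiv ℝ (fderiv ℝ φ) x‖ = Hn x := by
    intro x
    have h0 := norm_iteratedFDeriv_fderiv (𝕜 := ℝ) (f := fderiv ℝ φ) (n := 0) (x := x)
    rw [norm_iteratedFDeriv_zero] at h0
    have h1 := norm_iteratedFDeriv_fderiv (𝕜 := ℝ) (f := φ) (n := 1) (x := x)
    exact h0.trans h1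
  have hG'le : ∀ x, ‖G' x‖ ≤ Hn x := by
    intro x
    rw [← hn2 x]
    refine ContinuousLinearMap.opNorm_le_bound _ (by positivity) fun w => ?_
    have he : G' x w
        = (InnerProductSpace.toDual ℝ (EuclideanSpace ℝ (Fin N))).symm
          (fderiv ℝ (fderiv ℝ φ) x w) := rfl
    rw [he, LinearIsometryEquiv.norm_map]
    exact (fderiv ℝ (fderiv ℝ φ) x).le_opNorm w
  have hgc : Continuous g := by
    rw [hg_eq]
    exact ℓ.continuous.comp hφ'.continuous
  have hg0 : ∀ x, x ∉ tsupport φ → g x = 0 := by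
    intro x hx
    rw [hg_eq]
    simp only [fderiv_of_notMem_tsupport ℝ hx]
    exact map_zero _
  have hH0 : ∀ x, x ∉ tsupport φ → Hn x = 0 := by
    intro x hx
    have : iteratedFDeriv ℝ 2 φ x = 0 := by
      by_contra hcon
      exact hx (support_iteratedFDeriv_subset 2 hcon)
    simp only [hHn_def, this, norm_zero]
  -- the vector field and its derivative
  set V : EuclideanSpace ℝ (Fin N) → EuclideanSpace ℝ (Fin N) :=
    fun y => (1 + φ y) ^ (-q) • (‖g y‖ ^ a • g y) with hV_def
  set r' : EuclideanSpace ℝ (Fin N) → (EuclideanSpace ℝ (Fin N) →L[ℝ] ℝ) :=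
    fun x => (-q * (1 + φ x) ^ (-q - 1)) • fderiv ℝ φ x with hr'_def
  set V' : EuclideanSpace ℝ (Fin N) →
      (EuclideanSpace ℝ (Fin N) →L[ℝ] EuclideanSpace ℝ (Fin N)) :=
    fun x => (1 + φ x) ^ (-q) • ((Dh a (g x)) ∘L (G' x))
      + (r' x).smulRight (‖g x‖ ^ a • g x) with hV'_def
  have hud : ∀ x, HasFDerivAt (fun y => 1 + φ y) (fderiv ℝ φ x) x := fun x =>
    ((hφ1 x).hasFDerivAt).const_add 1
  have hrd : ∀ x, HasFDerivAt (fun y => (1 + φ y) ^ (-q)) (r' x) x := by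
    intro x
    exact HasDerivAt.comp_hasFDerivAt (f := fun y => 1 + φ y) x
      (Real.hasDerivAt_rpow_const (Or.inl (hu x).ne')) (hud x)
  have hVd : ∀ x, HasFDerivAt V (V' x) x := by
    intro x
    exact (hrd x).smul ((hasFDerivAt_normPow_smul ha (g x)).comp x (hgd x))
  have hV0 : ∀ x, x ∉ tsupport φ → V x = 0 := by
    intro x hx
    simp only [hV_def, hg0 x hx, smul_zero]
  have hVc : HasCompactSupport V := hφc.mono' (Function.support_subset_iff'.mpr hV0)
  -- integrands
  set L : EuclideanSpace ℝ (Fin N) → ℝ :=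
    fun x => ‖g x‖ ^ (2 * p) / (1 + φ x) ^ (2 * p) with hL_def
  set J : EuclideanSpace ℝ (Fin N) → ℝ :=
    fun x => Hn x ^ p / (1 + φ x) ^ p with hJ_def
  set M : EuclideanSpace ℝ (Fin N) → ℝ :=
    fun x => (‖g x‖ / (1 + φ x)) ^ (2 * p - 2) * (Hn x / (1 + φ x)) with hM_def
  set D : EuclideanSpace ℝ (Fin N) → ℝ :=
    fun x => ∑ i, V' x (EuclideanSpace.single i 1) i with hD_def
  have huc : Continuous fun x : EuclideanSpace ℝ (Fin N) => 1 + φ x :=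
    continuous_const.add hφ.continuous
  have hHc : Continuous Hn := (hφ.continuous_iteratedFDeriv (WithTop.coe_le_coe.mpr le_top)).norm
  -- integrability
  have iL : Integrable L := by
    apply Continuous.integrable_of_hasCompactSupport
    · apply Continuous.div
      · exact hgc.norm.rpow_const fun x => Or.inr (by positivity)
      · exact huc.rpow_const fun x => Or.inr (by positivity)
      · exact fun x => (Real.rpow_pos_of_pos (hu x) _).ne'
    · refine hφc.mono' (Function.support_subset_iff'.mpr fun x hx => ?_)
      simp only [hL_def, hg0 x hx, norm_zero]
      rw [Real.zero_rpow (by positivity), zero_div]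
  have iJ : Integrable J := by
    apply Continuous.integrable_of_hasCompactSupport
    · apply Continuous.div
      · exact hHc.rpow_const fun x => Or.inr (by positivity)
      · exact huc.rpow_const fun x => Or.inr (by positivity)
      · exact fun x => (Real.rpow_pos_of_pos (hu x) _).ne'
    · refine hφc.mono' (Function.support_subset_iff'.mpr fun x hx => ?_)
      simp only [hJ_def, hH0 x hx]
      rw [Real.zero_rpow (by positivity), zero_div]
  have iM : Integrable M := by
    apply Continuous.integrable_of_hasCompactSupport
    · apply Continuous.mul
      · refine Continuous.rpow_const ?_ fun x => Or.inr ha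
        exact hgc.norm.div huc fun x => (hu x).ne'
      · exact hHc.div huc fun x => (hu x).ne'
    · refine hφc.mono' (Function.support_subset_iff'.mpr fun x hx => ?_)
      simp only [hM_def, hH0 x hx, zero_div, mul_zero]
  have hHnn : ∀ x, 0 ≤ Hn x := fun x => by
    simp only [hHn_def]; exact norm_nonneg _
  have hLnn : ∀ x, 0 ≤ L x := fun x => by
    simp only [hL_def]
    exact div_nonneg (Real.rpow_nonneg (norm_nonneg _) _) (Real.rpow_nonneg (hu x).le _)
  have hMnn : ∀ x, 0 ≤ M x := fun x => by
    simp only [hM_def]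
    exact mul_nonneg (Real.rpow_nonneg (div_nonneg (norm_nonneg _) (hu x).le) _)
      (div_nonneg (hHnn x) (hu x).le)
  -- pointwise identity for the divergence
  have hsum_sq : ∀ x, (∑ i, g x i * g x i) = ‖g x‖ * ‖g x‖ := by
    intro x
    rw [← real_inner_self_eq_norm_mul_norm]
    rw [PiLp.inner_apply]
    apply Finset.sum_congr rfl
    intro i _
    simp [RCLike.inner_apply, conj_trivial, mul_comm]
    ring
  have hD_expand : ∀ x, D x
      = (1 + φ x) ^ (-q) * (∑ i, (Dh a (g x)) (G' x (EuclideanSpace.single i 1)) i)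
        + (-q * (1 + φ x) ^ (-q - 1) * ‖g x‖ ^ a) * (‖g x‖ * ‖g x‖) := by
    intro x
    simp only [hD_def]
    rw [← hsum_sq x, Finset.mul_sum, Finset.mul_sum, ← Finset.sum_add_distrib]
    apply Finset.sum_congr rfl
    intro i _
    simp only [hV'_def, ContinuousLinearMap.add_apply, ContinuousLinearMap.coe_smul',
      Pi.smul_apply, ContinuousLinearMap.comp_apply, ContinuousLinearMap.smulRight_apply,
      PiLp.add_apply, PiLp.smul_apply, smul_eq_mul, hr'_def]
    rw [show fderiv ℝ φ x (EuclideanSpace.single i 1) = g x i from by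
      rw [← hg_inner]; simp [EuclideanSpace.inner_single_right]]
    ring
  -- the divergence identity: D x + q * L x equals the controlled term
  have hkey : ∀ x, |D x + q * L x| ≤ c₁ * M x := by
    intro x
    have e1 : (1 + φ x) ^ (-q - 1) = ((1 + φ x) ^ (2 * p))⁻¹ := by
      rw [show -q - 1 = -(2 * p) by rw [hq_def]; ring, Real.rpow_neg (hu x).le]
    have e2 : ‖g x‖ ^ a * (‖g x‖ * ‖g x‖) = ‖g x‖ ^ (2 * p) := by
      rw [show (‖g x‖ * ‖g x‖ : ℝ) = ‖g x‖ ^ ((2:ℕ):ℝ) by rw [Real.rpow_natCast]; ring,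
        ← Real.rpow_add' (norm_nonneg _) (by push_cast; rw [ha_def]; intro hcon; linarith)]
      congr 1
      push_cast
      rw [ha_def]; ring
    have ecancel : (-q * (1 + φ x) ^ (-q - 1) * ‖g x‖ ^ a) * (‖g x‖ * ‖g x‖) + q * L x = 0 := by
      rw [e1]
      simp only [hL_def]
      have hne : ((1 + φ x) ^ (2 * p) : ℝ) ≠ 0 := (Real.rpow_pos_of_pos (hu x) _).ne'
      field_simp
      rw [← e2]; ring
    have hDL : D x + q * L x
        = (1 + φ x) ^ (-q) * (∑ i, (Dh a (g x)) (G' x (EuclideanSpace.single i 1)) i) := by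
      rw [hD_expand x]
      linarith [ecancel]
    rw [hDL]
    have hrpos : (0:ℝ) < (1 + φ x) ^ (-q) := Real.rpow_pos_of_pos (hu x) _
    rw [abs_mul, abs_of_pos hrpos]
    have hsum_le : |∑ i, (Dh a (g x)) (G' x (EuclideanSpace.single i 1)) i|
        ≤ (N : ℝ) * ((1 + a) * ‖g x‖ ^ a * Hn x) := by
      refine (Finset.abs_sum_le_sum_abs _ _).trans ?_
      have hterm : ∀ i : Fin N, |(Dh a (g x)) (G' x (EuclideanSpace.single i 1)) i|
          ≤ (1 + a) * ‖g x‖ ^ a * Hn x := by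
        intro i
        refine (coord_abs_le_norm _ i).trans ?_
        refine (norm_Dh_apply_le ha (g x) _).trans ?_
        have h1 : ‖G' x (EuclideanSpace.single i 1)‖ ≤ Hn x := by
          refine ((G' x).le_opNorm _).trans ?_
          have hs1 : ‖(EuclideanSpace.single i (1:ℝ) : EuclideanSpace ℝ (Fin N))‖ = 1 := by
            rw [EuclideanSpace.norm_single]
            norm_num
          rw [hs1, mul_one]
          exact hG'le x
        have h2 : (0:ℝ) ≤ (1 + a) * ‖g x‖ ^ a :=
          mul_nonneg (by linarith) (Real.rpow_nonneg (norm_nonneg _) _)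
        have h2' := hHnn x
        calc (1 + a) * ‖g x‖ ^ a * ‖G' x (EuclideanSpace.single i 1)‖
            ≤ (1 + a) * ‖g x‖ ^ a * Hn x := by gcongr
          _ = (1 + a) * ‖g x‖ ^ a * Hn x := rfl
      calc ∑ i, |(Dh a (g x)) (G' x (EuclideanSpace.single i 1)) i|
          ≤ ∑ _i : Fin N, (1 + a) * ‖g x‖ ^ a * Hn x := Finset.sum_le_sum fun i _ => hterm i
        _ = (N : ℝ) * ((1 + a) * ‖g x‖ ^ a * Hn x) := by
            rw [Finset.sum_const, Finset.card_univ, Fintype.card_fin, nsmul_eq_mul]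
    have eM : (1 + φ x) ^ (-q) * (‖g x‖ ^ a * Hn x) = M x := by
      simp only [hM_def]
      have hdiv : (‖g x‖ / (1 + φ x)) ^ (2 * p - 2)
          = ‖g x‖ ^ (2 * p - 2) / (1 + φ x) ^ (2 * p - 2) :=
        Real.div_rpow (norm_nonneg _) (hu x).le _
      rw [hdiv]
      have e3 : ((1 + φ x) : ℝ) ^ (-q) = ((1 + φ x) ^ a * (1 + φ x))⁻¹ := by
        rw [Real.rpow_neg (hu x).le]
        congr 1
        rw [show q = a + 1 by rw [hq_def, ha_def]; ring, Real.rpow_add (hu x), Real.rpow_one]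
      rw [e3, ha_def]
      have hne1 : ((1 + φ x) ^ (2*p-2) : ℝ) ≠ 0 := (Real.rpow_pos_of_pos (hu x) _).ne'
      have hne2 : ((1 + φ x) : ℝ) ≠ 0 := (hu x).ne'
      field_simp
    calc (1 + φ x) ^ (-q) * |∑ i, (Dh a (g x)) (G' x (EuclideanSpace.single i 1)) i|
        ≤ (1 + φ x) ^ (-q) * ((N : ℝ) * ((1 + a) * ‖g x‖ ^ a * Hn x)) := by
          exact mul_le_mul_of_nonneg_left hsum_le hrpos.le
      _ ≤ (1 + φ x) ^ (-q) * (((N : ℝ) + 1) * ((1 + a) * ‖g x‖ ^ a * Hn x)) := by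
          have : (0:ℝ) ≤ (1 + a) * ‖g x‖ ^ a * Hn x :=
            mul_nonneg (mul_nonneg (by linarith) (Real.rpow_nonneg (norm_nonneg _) _)) (hHnn x)
          have hN : (N : ℝ) ≤ (N : ℝ) + 1 := by linarith
          gcongr
      _ = c₁ * ((1 + φ x) ^ (-q) * (‖g x‖ ^ a * Hn x)) := by rw [hc₁_def]; ring
      _ = c₁ * M x := by rw [eM]
  -- integrability of the divergence
  have hDmeas : Measurable D := by
    have hD_eq' : D = fun x => ∑ i,
        (EuclideanSpace.proj i : EuclideanSpace ℝ (Fin N) →L[ℝ] ℝ)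
          (fderiv ℝ V x (EuclideanSpace.single i 1)) := by
      funext x
      simp only [hD_def]
      apply Finset.sum_congr rfl
      intro i _
      rw [show fderiv ℝ V x = V' x from (hVd x).fderiv]
      rfl
    rw [hD_eq']
    exact Finset.measurable_sum _ fun i _ =>
      (EuclideanSpace.proj i).continuous.measurable.comp
        (measurable_fderiv_apply_const ℝ V _)
  have iD : Integrable D := by
    refine Integrable.mono' ((iL.const_mul q).add (iM.const_mul c₁))
      hDmeas.aestronglyMeasurable (Filter.Eventually.of_forall fun x => ?_)
    have h1 := (abs_le.mp (hkey x)).1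
    have h1' := (abs_le.mp (hkey x)).2
    have h2 : |D x| ≤ |D x + q * L x| + q * L x := by
      have h0 := abs_add_le (D x + q * L x) (-(q * L x))
      rw [show D x + q * L x + -(q * L x) = D x by ring, abs_neg,
        abs_of_nonneg (mul_nonneg hq.le (hLnn x))] at h0
      exact h0
    rw [Real.norm_eq_abs]
    have h3 := abs_le.mpr ⟨h1, h1'⟩
    simp only [Pi.add_apply]
    linarith [h2, h3, hMnn x]
  have hibp : ∫ x, D x = 0 := integral_divergence_eq_zero V V' hVd hVc iD
  have key1 : q * ∫ x, L x ≤ c₁ * ∫ x, M x := by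
    have h1 : ∫ x, (q * L x + D x) = q * ∫ x, L x := by
      rw [integral_add (iL.const_mul q) iD, hibp, add_zero, integral_const_mul]
    rw [← h1]
    calc ∫ x, (q * L x + D x) ≤ ∫ x, c₁ * M x := by
          refine integral_mono ((iL.const_mul q).add iD) (iM.const_mul c₁) fun x => ?_
          have h2 := (abs_le.mp (hkey x)).2
          simp only [Pi.add_apply]
          linarith
      _ = c₁ * ∫ x, M x := integral_const_mul _ _
  have key2 : ∫ x, M x ≤ q / (2 * c₁) * (∫ x, L x) + K * ∫ x, J x := by
    have hpt : ∀ x, M x ≤ q / (2 * c₁) * L x + K * J x := by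
      intro x
      have hy := hK (‖g x‖ / (1 + φ x)) (Hn x / (1 + φ x))
        (div_nonneg (norm_nonneg _) (hu x).le) (div_nonneg (hHnn x) (hu x).le)
      have eX : (‖g x‖ / (1 + φ x)) ^ (2 * p) = L x := by
        simp only [hL_def]
        exact Real.div_rpow (norm_nonneg _) (hu x).le _
      have eY : (Hn x / (1 + φ x)) ^ p = J x := by
        simp only [hJ_def]
        exact Real.div_rpow (hHnn x) (hu x).le _
      rw [eX, eY] at hy
      simpa only [hM_def] using hy
    calc ∫ x, M x ≤ ∫ x, (q / (2 * c₁) * L x + K * J x) :=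
          integral_mono iM ((iL.const_mul _).add (iJ.const_mul K)) hpt
      _ = q / (2 * c₁) * (∫ x, L x) + K * ∫ x, J x := by
          rw [integral_add (iL.const_mul _) (iJ.const_mul K), integral_const_mul,
            integral_const_mul]
  have hfin : q * ∫ x, L x ≤ c₁ * (q / (2 * c₁) * (∫ x, L x) + K * ∫ x, J x) :=
    key1.trans (mul_le_mul_of_nonneg_left key2 hc₁pos.le)
  have h5 : c₁ * (q / (2 * c₁)) = q / 2 := by
    field_simp
  have h6 : q / 2 * ∫ x, L x ≤ c₁ * K * ∫ x, J x := by
    rw [mul_add, ← mul_assoc, h5] at hfin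
    linarith
  show (∫ x, L x) ≤ 2 * c₁ * K / q * ∫ x, J x
  calc ∫ x, L x = 2 / q * (q / 2 * ∫ x, L x) := by field_simp
    _ ≤ 2 / q * (c₁ * K * ∫ x, J x) := mul_le_mul_of_nonneg_left h6 (by positivity)
    _ = 2 * c₁ * K / q * ∫ x, J x := by field_simp
end
end

section
/- (Maz'ya's inequality.) For every p > 1 there exists a constant C > 0 (depending only on p and N) such that for every nonnegative function φ ∈ C_c^∞(ℝ^N), ∫_{ℝ^N} |∇φ|^{2p}/(1 + φ)^p ≤ C ∫_{ℝ^N} |D²φ|^p, where D²φ denotes the Hessian matrix of φ and |D²φ| its norm. -/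
set_option maxHeartbeats 1000000


open MeasureTheory Filter Metric
open scoped ENNReal Topology

noncomputable section

variable {N : ℕ}

lemma integral_fderiv_apply_eq_zero' {E : Type*} [NormedAddCommGroup E] [NormedSpace ℝ E]
    [MeasurableSpace E] [BorelSpace E] [FiniteDimensional ℝ E] {μ : Measure E}
    [μ.IsAddHaarMeasure] {h : E → ℝ} {v : E}
    (hd : Differentiable ℝ h) (hi : Integrable h μ)
    (hi' : Integrable (fun x => fderiv ℝ h x v) μ) :
    ∫ x, fderiv ℝ h x v ∂μ = 0 := by
  have := integral_mul_fderiv_eq_neg_fderiv_mul_of_integrable (μ := μ)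
    (f := fun _ => (1:ℝ)) (g := h) (v := v) ?_ ?_ ?_ (fun x _ => differentiableAt_const _) (fun x _ => hd x)
  · simpa [fderiv_fun_const] using this
  · simp [fderiv_fun_const]
  · simpa using hi'
  · simpa using hi

/-- **Maz'ya's inequality**. For every `p > 1` there exists `C > 0`, depending only on
`p` and `N`, such that for every nonnegative `φ ∈ C_c^∞(ℝ^N)`,
`∫ |∇φ|^{2p}/(1+φ)^p ≤ C ∫ |D²φ|^p`. -/
theorem mazya_inequality (p : ℝ) (hp : 1 < p) :
    ∃ C > 0, ∀ φ : EuclideanSpace ℝ (Fin N) → ℝ,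
      ContDiff ℝ (⊤ : ℕ∞) φ → HasCompactSupport φ → (∀ x, 0 ≤ φ x) →
      ∫ x, ‖gradient φ x‖ ^ (2 * p) / (1 + φ x) ^ p ≤
        C * ∫ x, ‖iteratedFDeriv ℝ 2 φ x‖ ^ p := by
  have hp0 : (0:ℝ) < p := lt_trans one_pos hp
  have hp1 : (0:ℝ) < p - 1 := sub_pos.mpr hp
  set c : ℝ := 2 * (p - 1) + N with hcdef
  have hc0 : (0:ℝ) < c := by positivity
  refine ⟨(c / (p-1)) ^ p, Real.rpow_pos_of_pos (div_pos hc0 hp1) p, ?_⟩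
  intro φ hφ hφsupp hφ0
  set g : EuclideanSpace ℝ (Fin N) → EuclideanSpace ℝ (Fin N) := fun y => gradient φ y with hgdef
  set H : EuclideanSpace ℝ (Fin N) → ℝ := fun x => ‖iteratedFDeriv ℝ 2 φ x‖ with hHdef
  set u : EuclideanSpace ℝ (Fin N) → ℝ := fun x => (inner ℝ (g x) (g x) : ℝ) with hudef
  set s : EuclideanSpace ℝ (Fin N) → ℝ := fun x => 1 + φ x with hsdef
  set K : Set (EuclideanSpace ℝ (Fin N)) := tsupport φ with hKdef
  set R : ℝ := ∫ x, H x ^ p with hRdef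
  set A : ℝ := ∫ x, s x ^ (-p) * u x ^ p with hAdef
  -- basic facts
  have hφd : Differentiable ℝ φ := hφ.differentiable (by simp)
  have hgs : ContDiff ℝ (⊤ : ℕ∞) g :=
    ((InnerProductSpace.toDual ℝ (EuclideanSpace ℝ (Fin N))).symm.contDiff).comp
      (hφ.fderiv_right (m := (⊤ : ℕ∞)) (by simp))
  have hgd : Differentiable ℝ g := hgs.differentiable (by simp)
  have hgc : Continuous g := hgd.continuous
  have hg'c : Continuous (fderiv ℝ g) := (hgs.fderiv_right (m := (⊤ : ℕ∞)) (by simp)).continuous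
  have hφ'c : Continuous (fderiv ℝ φ) := (hφ.fderiv_right (m := (⊤ : ℕ∞)) (by simp)).continuous
  have hφ'd : Differentiable ℝ (fderiv ℝ φ) := (hφ.fderiv_right (m := (⊤ : ℕ∞)) (by simp)).differentiable (by simp)
  have huc : Continuous u := hgc.inner hgc
  have hu0 : ∀ x, 0 ≤ u x := fun x => real_inner_self_nonneg
  have hHc : Continuous H := (hφ.continuous_iteratedFDeriv (by exact (WithTop.coe_le_coe.mpr (le_top : (2:ℕ∞) ≤ ⊤) : ((2:ℕ∞) : WithTop ℕ∞) ≤ ((⊤:ℕ∞) : WithTop ℕ∞)))).norm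
  have hH0 : ∀ x, 0 ≤ H x := fun x => norm_nonneg _
  have hs0 : ∀ x, 0 < s x := fun x => by have := hφ0 x; simp only [hsdef]; linarith
  have hs1 : ∀ x, 1 ≤ s x := fun x => by have := hφ0 x; simp only [hsdef]; linarith
  have hsc : Continuous s := continuous_const.add hφ.continuous
  have hKc : IsCompact K := hφsupp
  have hKcl : IsClosed K := isClosed_tsupport φ
  have key_int : ∀ f : EuclideanSpace ℝ (Fin N) → ℝ, Continuous f → (∀ x ∉ K, f x = 0) →
      Integrable f := fun f hf h0 =>
    hf.integrable_of_hasCompactSupport (HasCompactSupport.intro hKc h0)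
  -- vanishing off K
  have hgK : ∀ x ∉ K, g x = 0 := by
    intro x hx
    have h1 : fderiv ℝ φ x = 0 :=
      image_eq_zero_of_notMem_tsupport (fun hm => hx (tsupport_fderiv_subset ℝ hm))
    simp [hgdef, gradient, h1]
  have htsg : tsupport g ⊆ K := closure_minimal
    (fun x hx => by by_contra hxK; exact hx (hgK x hxK)) hKcl
  have hg'K : ∀ x ∉ K, fderiv ℝ g x = 0 := by
    intro x hx
    exact image_eq_zero_of_notMem_tsupport (fun hm => hx (htsg (tsupport_fderiv_subset ℝ hm)))
  have hHK : ∀ x ∉ K, H x = 0 := by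
    intro x hx
    have : iteratedFDeriv ℝ 2 φ x = 0 :=
      image_eq_zero_of_notMem_tsupport (fun hm => hx (tsupport_iteratedFDeriv_subset 2 hm))
    simp [hHdef, this]
  have huK : ∀ x ∉ K, u x = 0 := fun x hx => by simp [hudef, hgK x hx]
  -- duality: ⟪g x, v⟫ = fderiv φ x v
  have hgip : ∀ x (v : EuclideanSpace ℝ (Fin N)), (inner ℝ (g x) v : ℝ) = fderiv ℝ φ x v :=
    fun x v => InnerProductSpace.toDual_symm_apply
  have hφ'gx : ∀ x, fderiv ℝ φ x (g x) = u x := fun x => (hgip x (g x)).symm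
  -- Hessian bound
  have hg'b : ∀ x w, ‖fderiv ℝ g x w‖ ≤ H x * ‖w‖ := by
    intro x w
    have key : ∀ v, (inner ℝ (fderiv ℝ g x w) v : ℝ) = fderiv ℝ (fderiv ℝ φ) x w v := by
      intro v
      have h1 : (fun y => (inner ℝ v (g y) : ℝ)) = fun y => fderiv ℝ φ y v := by
        funext y; rw [real_inner_comm]; exact hgip y v
      have h2 : fderiv ℝ (fun y => (inner ℝ v (g y) : ℝ)) x = (innerSL ℝ v).comp (fderiv ℝ g x) :=
        ((innerSL ℝ v).hasFDerivAt.comp x (hgd x).hasFDerivAt).fderiv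
      have h3 : fderiv ℝ (fun y => fderiv ℝ φ y v) x
          = (ContinuousLinearMap.apply ℝ ℝ v).comp (fderiv ℝ (fderiv ℝ φ) x) :=
        ((ContinuousLinearMap.apply ℝ ℝ v).hasFDerivAt.comp x (hφ'd x).hasFDerivAt).fderiv
      rw [h1] at h2
      have := congrArg (fun (L : EuclideanSpace ℝ (Fin N) →L[ℝ] ℝ) => L w) (h2.symm.trans h3)
      rw [real_inner_comm]
      exact this
    have hb : ∀ v, (inner ℝ (fderiv ℝ g x w) v : ℝ) ≤ H x * ‖w‖ * ‖v‖ := by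
      intro v
      rw [key v]
      have h4 : fderiv ℝ (fderiv ℝ φ) x w v = iteratedFDeriv ℝ 2 φ x ![w, v] := by
        rw [iteratedFDeriv_two_apply]; norm_num
      calc fderiv ℝ (fderiv ℝ φ) x w v ≤ ‖iteratedFDeriv ℝ 2 φ x ![w, v]‖ := by
            rw [← h4]; exact le_abs_self _
        _ ≤ ‖iteratedFDeriv ℝ 2 φ x‖ * ∏ i, ‖(![w, v]) i‖ := (iteratedFDeriv ℝ 2 φ x).le_opNorm _
        _ = H x * ‖w‖ * ‖v‖ := by
            rw [Fin.prod_univ_two]; ring_nf; rfl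
    rcases eq_or_lt_of_le (norm_nonneg (fderiv ℝ g x w)) with h | h
    · rw [← h]; positivity
    · have h5 := hb (fderiv ℝ g x w)
      rw [real_inner_self_eq_norm_mul_norm] at h5
      calc ‖fderiv ℝ g x w‖ = ‖fderiv ℝ g x w‖ * ‖fderiv ℝ g x w‖ / ‖fderiv ℝ g x w‖ := by
            field_simp
      _ ≤ H x * ‖w‖ * ‖fderiv ℝ g x w‖ / ‖fderiv ℝ g x w‖ := div_le_div_of_nonneg_right h5 h.le |>.trans_eq rfl
      _ = H x * ‖w‖ := by field_simp
  -- derivative of u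
  set U : EuclideanSpace ℝ (Fin N) → (EuclideanSpace ℝ (Fin N) →L[ℝ] ℝ) :=
    fun x => (2:ℝ) • ((innerSL ℝ (g x)).comp (fderiv ℝ g x)) with hUdef
  have hUapp : ∀ x w, U x w = 2 * (inner ℝ (g x) (fderiv ℝ g x w) : ℝ) := by
    intro x w; simp [hUdef]
  have hU : ∀ x, HasFDerivAt u (U x) x := by
    intro x
    have h := ((hgd x).hasFDerivAt.inner ℝ (hgd x).hasFDerivAt)
    refine h.congr_fderiv ?_
    ext w
    simp only [hUapp, ContinuousLinearMap.comp_apply, ContinuousLinearMap.prod_apply,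
      fderivInnerCLM_apply]
    rw [real_inner_comm (fderiv ℝ g x w) (g x)]
    ring
  have hUwcont : ∀ w, Continuous fun x => U x w := by
    intro w
    simp only [hUapp]
    exact continuous_const.mul (hgc.inner
      ((ContinuousLinearMap.apply ℝ (EuclideanSpace ℝ (Fin N)) w).continuous.comp hg'c))
  have hUgb : ∀ x, U x (g x) ≤ 2 * (H x * u x) := by
    intro x
    rw [hUapp]
    have h1 : (inner ℝ (g x) (fderiv ℝ g x (g x)) : ℝ) ≤ ‖g x‖ * ‖fderiv ℝ g x (g x)‖ :=
      real_inner_le_norm _ _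
    have h2 : ‖fderiv ℝ g x (g x)‖ ≤ H x * ‖g x‖ := hg'b x (g x)
    have h3 : ‖g x‖ * ‖g x‖ = u x := (real_inner_self_eq_norm_mul_norm (g x)).symm
    nlinarith [norm_nonneg (g x), hH0 x]
  have hR0 : 0 ≤ R := integral_nonneg (fun x => Real.rpow_nonneg (hH0 x) p)
  have hA0 : 0 ≤ A := integral_nonneg (fun x =>
    mul_nonneg (Real.rpow_nonneg (hs0 x).le _) (Real.rpow_nonneg (hu0 x) _))
  have hAK : (∫ x in K, s x ^ (-p) * u x ^ p) = A := by
    refine setIntegral_eq_integral_of_forall_compl_eq_zero (fun x hx => ?_)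
    rw [huK x hx, Real.zero_rpow hp0.ne', mul_zero]
  have hRK : (∫ x in K, H x ^ p) = R := by
    refine setIntegral_eq_integral_of_forall_compl_eq_zero (fun x hx => ?_)
    rw [hHK x hx, Real.zero_rpow hp0.ne']
  haveI hfinK : IsFiniteMeasure (volume.restrict K) :=
    ⟨by rw [Measure.restrict_apply_univ]; exact hKc.measure_lt_top⟩
  -- the main inequality for fixed ε
  have main : ∀ ε : ℝ, 0 < ε →
      (p-1) * A ≤ c * ((∫ x in K, s x ^ (-p) * (ε + u x) ^ p) ^ (1-1/p) * R ^ (1/p)) := by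
    intro ε hε
    set r : EuclideanSpace ℝ (Fin N) → ℝ := fun x => ε + u x with hrdef
    have hr0 : ∀ x, 0 < r x := fun x => add_pos_of_pos_of_nonneg hε (hu0 x)
    have hrc : Continuous r := continuous_const.add huc
    set a : EuclideanSpace ℝ (Fin N) → ℝ := fun x => r x ^ (p-1) * s x ^ (1-p) with hadef
    have hac : Continuous a :=
      (hrc.rpow_const (fun x => Or.inl (hr0 x).ne')).mul
        (hsc.rpow_const (fun x => Or.inl (hs0 x).ne'))
    have ha0 : ∀ x, 0 ≤ a x := fun x =>
      mul_nonneg (Real.rpow_nonneg (hr0 x).le _) (Real.rpow_nonneg (hs0 x).le _)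
    set D : EuclideanSpace ℝ (Fin N) → (EuclideanSpace ℝ (Fin N) →L[ℝ] ℝ) := fun x =>
      r x ^ (p-1) • (((1-p) * s x ^ (1-p-1)) • fderiv ℝ φ x)
      + s x ^ (1-p) • (((p-1) * r x ^ (p-1-1)) • U x) with hDdef
    have haD : ∀ x, HasFDerivAt a (D x) x := by
      intro x
      have h1 : HasFDerivAt (fun y => r y ^ (p-1)) (((p-1) * r x ^ (p-1-1)) • U x) x :=
        ((hU x).const_add ε).rpow_const (Or.inl (hr0 x).ne')
      have h2 : HasFDerivAt (fun y => s y ^ (1-p)) (((1-p) * s x ^ (1-p-1)) • fderiv ℝ φ x) x :=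
        ((hφd x).hasFDerivAt.const_add 1).rpow_const (Or.inl (hs0 x).ne')
      exact h1.mul h2
    have hDapp : ∀ x w, D x w =
        r x ^ (p-1) * ((1-p) * s x ^ (1-p-1) * fderiv ℝ φ x w)
        + s x ^ (1-p) * ((p-1) * r x ^ (p-1-1) * U x w) := by
      intro x w
      simp [hDdef, mul_assoc]
    have hDwcont : ∀ w, Continuous fun x => D x w := by
      intro w
      simp only [hDapp]
      have hφ'w : Continuous fun x => fderiv ℝ φ x w :=
        (ContinuousLinearMap.apply ℝ ℝ w).continuous.comp hφ'c
      exact ((hrc.rpow_const (fun x => Or.inl (hr0 x).ne')).mul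
        ((continuous_const.mul (hsc.rpow_const (fun x => Or.inl (hs0 x).ne'))).mul hφ'w)).add
        ((hsc.rpow_const (fun x => Or.inl (hs0 x).ne')).mul
          ((continuous_const.mul (hrc.rpow_const (fun x => Or.inl (hr0 x).ne'))).mul (hUwcont w)))
    set bb : OrthonormalBasis (Fin N) ℝ (EuclideanSpace ℝ (Fin N)) :=
      EuclideanSpace.basisFun (Fin N) ℝ with hbbdef
    set T : EuclideanSpace ℝ (Fin N) → ℝ :=
      fun x => ∑ i, (inner ℝ (bb i) (fderiv ℝ g x (bb i)) : ℝ) with hTdef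
    have hTc : Continuous T := continuous_finset_sum _ (fun i _ =>
      continuous_const.inner
        ((ContinuousLinearMap.apply ℝ (EuclideanSpace ℝ (Fin N)) (bb i)).continuous.comp hg'c))
    have hTK : ∀ x ∉ K, T x = 0 := by
      intro x hx
      simp [hTdef, hg'K x hx]
    have hTb : ∀ x, T x ≤ N * H x := by
      intro x
      have hcard : ∑ _i : Fin N, H x = N * H x := by
        rw [Finset.sum_const, Finset.card_univ, Fintype.card_fin, nsmul_eq_mul]
      rw [hTdef, ← hcard]
      refine Finset.sum_le_sum (fun i _ => ?_)
      have h3 : ‖bb i‖ = 1 := bb.orthonormal.1 i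
      calc (inner ℝ (bb i) (fderiv ℝ g x (bb i)) : ℝ)
          ≤ ‖bb i‖ * ‖fderiv ℝ g x (bb i)‖ := real_inner_le_norm _ _
        _ = ‖fderiv ℝ g x (bb i)‖ := by rw [h3, one_mul]
        _ ≤ H x * ‖bb i‖ := hg'b x (bb i)
        _ = H x := by rw [h3, mul_one]
    have hUgc : Continuous fun x => U x (g x) := by
      simp only [hUapp]
      exact continuous_const.mul (hgc.inner (hg'c.clm_apply hgc))
    have hderiv_i : ∀ (i : Fin N) x, HasFDerivAt (fun y => a y * (inner ℝ (bb i) (g y) : ℝ))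
        (a x • ((innerSL ℝ (bb i)).comp (fderiv ℝ g x)) + (inner ℝ (bb i) (g x) : ℝ) • D x) x :=
      fun i x => (haD x).mul ((innerSL ℝ (bb i)).hasFDerivAt.comp x (hgd x).hasFDerivAt)
    have hinteg_i : ∀ i : Fin N, Integrable (fun x =>
        a x * (inner ℝ (bb i) (fderiv ℝ g x (bb i)) : ℝ)
          + (inner ℝ (bb i) (g x) : ℝ) * D x (bb i)) := by
      intro i
      apply key_int
      · exact (hac.mul (continuous_const.inner
          ((ContinuousLinearMap.apply ℝ (EuclideanSpace ℝ (Fin N)) (bb i)).continuous.comp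
            hg'c))).add ((continuous_const.inner hgc).mul (hDwcont (bb i)))
      · intro x hx
        simp [hg'K x hx, hgK x hx]
    have hint_i : ∀ i : Fin N, ∫ x, (a x * (inner ℝ (bb i) (fderiv ℝ g x (bb i)) : ℝ)
        + (inner ℝ (bb i) (g x) : ℝ) * D x (bb i)) = 0 := by
      intro i
      have heq : (fun x => fderiv ℝ (fun y => a y * (inner ℝ (bb i) (g y) : ℝ)) x (bb i))
          = fun x => a x * (inner ℝ (bb i) (fderiv ℝ g x (bb i)) : ℝ)
            + (inner ℝ (bb i) (g x) : ℝ) * D x (bb i) := by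
        funext x
        rw [(hderiv_i i x).fderiv]
        simp [ContinuousLinearMap.add_apply, ContinuousLinearMap.smul_apply, smul_eq_mul]
      rw [← heq]
      refine integral_fderiv_apply_eq_zero' (fun x => (hderiv_i i x).differentiableAt) ?_ ?_
      · apply key_int
        · exact hac.mul (continuous_const.inner hgc)
        · intro x hx; simp [hgK x hx]
      · rw [heq]; exact hinteg_i i
    have hzero : ∫ x, (a x * T x + D x (g x)) = 0 := by
      have hpt : ∀ x, (a x * T x + D x (g x))
          = ∑ i : Fin N, (a x * (inner ℝ (bb i) (fderiv ℝ g x (bb i)) : ℝ)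
            + (inner ℝ (bb i) (g x) : ℝ) * D x (bb i)) := by
        intro x
        rw [Finset.sum_add_distrib, ← Finset.mul_sum]
        congr 1
        have hrepr : (∑ i, (inner ℝ (bb i) (g x) : ℝ) • bb i) = g x := by
          simpa [OrthonormalBasis.repr_apply_apply] using bb.sum_repr (g x)
        calc D x (g x) = D x (∑ i, (inner ℝ (bb i) (g x) : ℝ) • bb i) := by rw [hrepr]
          _ = ∑ i, (inner ℝ (bb i) (g x) : ℝ) * D x (bb i) := by
              rw [map_sum]
              exact Finset.sum_congr rfl (fun i _ => by
                rw [ContinuousLinearMap.map_smul, smul_eq_mul])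
      rw [integral_congr_ae (Eventually.of_forall hpt),
        integral_finset_sum _ (fun i _ => hinteg_i i)]
      exact Finset.sum_eq_zero (fun i _ => hint_i i)
    have hDg : ∀ x, D x (g x) = (p-1) * (s x ^ (1-p) * (r x ^ (p-1-1) * U x (g x)))
        - (p-1) * (s x ^ (1-p-1) * (r x ^ (p-1) * u x)) := by
      intro x
      rw [hDapp, hφ'gx x]
      ring
    have hF1int : Integrable (fun x => s x ^ (1-p-1) * (r x ^ (p-1) * u x)) := by
      apply key_int
      · exact (hsc.rpow_const (fun x => Or.inl (hs0 x).ne')).mul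
          ((hrc.rpow_const (fun x => Or.inl (hr0 x).ne')).mul huc)
      · intro x hx; simp [huK x hx]
    have hF2int : Integrable (fun x => a x * T x
        + (p-1) * (s x ^ (1-p) * (r x ^ (p-1-1) * U x (g x)))) := by
      apply key_int
      · exact (hac.mul hTc).add (continuous_const.mul
          ((hsc.rpow_const (fun x => Or.inl (hs0 x).ne')).mul
            ((hrc.rpow_const (fun x => Or.inl (hr0 x).ne')).mul hUgc)))
      · intro x hx
        simp [hTK x hx, hUapp, hgK x hx]
    have h12 : (p-1) * ∫ x, s x ^ (1-p-1) * (r x ^ (p-1) * u x)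
        = ∫ x, (a x * T x + (p-1) * (s x ^ (1-p) * (r x ^ (p-1-1) * U x (g x)))) := by
      have hsplit : ∫ x, (a x * T x + D x (g x))
          = (∫ x, (a x * T x + (p-1) * (s x ^ (1-p) * (r x ^ (p-1-1) * U x (g x)))))
            - (p-1) * ∫ x, s x ^ (1-p-1) * (r x ^ (p-1) * u x) := by
        rw [← integral_const_mul, ← integral_sub hF2int (hF1int.const_mul _)]
        refine integral_congr_ae (Eventually.of_forall fun x => ?_)
        show a x * T x + D x (g x)
          = a x * T x + (p-1) * (s x ^ (1-p) * (r x ^ (p-1-1) * U x (g x)))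
            - (p-1) * (s x ^ (1-p-1) * (r x ^ (p-1) * u x))
        rw [hDg x]; ring
      rw [hzero] at hsplit
      linarith [hsplit]
    have hAle : A ≤ ∫ x, s x ^ (1-p-1) * (r x ^ (p-1) * u x) := by
      rw [hAdef]
      refine integral_mono ?_ hF1int (fun x => ?_)
      · apply key_int
        · exact (hsc.rpow_const (fun x => Or.inl (hs0 x).ne')).mul
            (huc.rpow_const (fun x => Or.inr hp0.le))
        · intro x hx; simp [huK x hx, Real.zero_rpow hp0.ne']
      · have he : (1:ℝ)-p-1 = -p := by ring
        rw [he]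
        have h1 : u x ^ p ≤ r x ^ (p-1) * u x := by
          rcases eq_or_lt_of_le (hu0 x) with h0 | h0
          · rw [← h0, Real.zero_rpow hp0.ne', mul_zero]
          · calc u x ^ p = u x ^ ((p-1)+1) := by norm_num
              _ = u x ^ (p-1) * u x ^ (1:ℝ) := Real.rpow_add h0 (p-1) 1
              _ = u x ^ (p-1) * u x := by rw [Real.rpow_one]
              _ ≤ r x ^ (p-1) * u x := by
                  apply mul_le_mul_of_nonneg_right _ (hu0 x)
                  exact Real.rpow_le_rpow (hu0 x) (le_add_of_nonneg_left hε.le) hp1.le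
        exact mul_le_mul_of_nonneg_left h1 (Real.rpow_nonneg (hs0 x).le _)
    have hF2le : ∫ x, (a x * T x + (p-1) * (s x ^ (1-p) * (r x ^ (p-1-1) * U x (g x))))
        ≤ c * ∫ x, (s x ^ (1-p) * r x ^ (p-1)) * H x := by
      rw [← integral_const_mul]
      have hGint : Integrable (fun x => c * ((s x ^ (1-p) * r x ^ (p-1)) * H x)) := by
        apply Integrable.const_mul
        apply key_int
        · exact ((hsc.rpow_const (fun x => Or.inl (hs0 x).ne')).mul
            (hrc.rpow_const (fun x => Or.inl (hr0 x).ne'))).mul hHc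
        · intro x hx; simp [hHK x hx]
      refine integral_mono hF2int hGint (fun x => ?_)
      have e1 : a x * T x ≤ (s x ^ (1-p) * r x ^ (p-1)) * (N * H x) := by
        calc a x * T x ≤ a x * (N * H x) := by
              apply mul_le_mul_of_nonneg_left (hTb x) (ha0 x)
          _ = (s x ^ (1-p) * r x ^ (p-1)) * (N * H x) := by
              simp only [hadef]; ring
      have hs' : (0:ℝ) ≤ s x ^ (1-p) := Real.rpow_nonneg (hs0 x).le _
      have hr' : (0:ℝ) ≤ r x ^ (p-1-1) := Real.rpow_nonneg (hr0 x).le _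
      have e2 : (p-1) * (s x ^ (1-p) * (r x ^ (p-1-1) * U x (g x)))
          ≤ (s x ^ (1-p) * r x ^ (p-1)) * (2*(p-1) * H x) := by
        have step1 : r x ^ (p-1-1) * U x (g x) ≤ r x ^ (p-1-1) * (2 * (H x * u x)) :=
          mul_le_mul_of_nonneg_left (hUgb x) hr'
        have step2 : r x ^ (p-1-1) * (2 * (H x * u x)) ≤ 2 * H x * r x ^ (p-1) := by
          have h7 : r x ^ (p-1-1) * u x ≤ r x ^ (p-1) := by
            calc r x ^ (p-1-1) * u x ≤ r x ^ (p-1-1) * r x :=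
                  mul_le_mul_of_nonneg_left (le_add_of_nonneg_left hε.le) hr'
              _ = r x ^ (p-1) := by
                  rw [← Real.rpow_add_one (hr0 x).ne' (p-1-1)]
                  norm_num
          calc r x ^ (p-1-1) * (2 * (H x * u x)) = 2 * H x * (r x ^ (p-1-1) * u x) := by ring
            _ ≤ 2 * H x * r x ^ (p-1) := by
                apply mul_le_mul_of_nonneg_left h7
                have := hH0 x
                positivity
        calc (p-1) * (s x ^ (1-p) * (r x ^ (p-1-1) * U x (g x)))
            ≤ (p-1) * (s x ^ (1-p) * (2 * H x * r x ^ (p-1))) := by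
              apply mul_le_mul_of_nonneg_left _ hp1.le
              exact mul_le_mul_of_nonneg_left (step1.trans step2) hs'
          _ = (s x ^ (1-p) * r x ^ (p-1)) * (2*(p-1) * H x) := by ring
      calc a x * T x + (p-1) * (s x ^ (1-p) * (r x ^ (p-1-1) * U x (g x)))
          ≤ (s x ^ (1-p) * r x ^ (p-1)) * (N * H x)
            + (s x ^ (1-p) * r x ^ (p-1)) * (2*(p-1) * H x) := add_le_add e1 e2
        _ = c * ((s x ^ (1-p) * r x ^ (p-1)) * H x) := by rw [hcdef]; ring
    have hsetI : ∫ x, (s x ^ (1-p) * r x ^ (p-1)) * H x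
        = ∫ x in K, (s x ^ (1-p) * r x ^ (p-1)) * H x := by
      symm
      refine setIntegral_eq_integral_of_forall_compl_eq_zero (fun x hx => ?_)
      rw [hHK x hx, mul_zero]
    set q : ℝ := p / (p-1) with hqdef
    have hpq : q.HolderConjugate p := (Real.HolderConjugate.conjExponent hp).symm
    have hwc : Continuous fun x => s x ^ (1-p) * r x ^ (p-1) :=
      (hsc.rpow_const (fun x => Or.inl (hs0 x).ne')).mul
        (hrc.rpow_const (fun x => Or.inl (hr0 x).ne'))
    obtain ⟨M1, hM1⟩ : ∃ M, ∀ x ∈ K, ‖s x ^ (1-p) * r x ^ (p-1)‖ ≤ M :=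
      hKc.exists_bound_of_continuousOn hwc.continuousOn
    obtain ⟨M2, hM2⟩ : ∃ M, ∀ x ∈ K, ‖H x‖ ≤ M :=
      hKc.exists_bound_of_continuousOn hHc.continuousOn
    have hmemf : MemLp (fun x => s x ^ (1-p) * r x ^ (p-1)) (ENNReal.ofReal q)
        (volume.restrict K) :=
      MemLp.of_bound hwc.aestronglyMeasurable M1
        ((ae_restrict_mem hKcl.measurableSet).mono hM1)
    have hmemH : MemLp H (ENNReal.ofReal p) (volume.restrict K) :=
      MemLp.of_bound hHc.aestronglyMeasurable M2
        ((ae_restrict_mem hKcl.measurableSet).mono hM2)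
    have holder : ∫ x in K, (s x ^ (1-p) * r x ^ (p-1)) * H x
        ≤ (∫ x in K, (s x ^ (1-p) * r x ^ (p-1)) ^ q) ^ (1/q) * (∫ x in K, H x ^ p) ^ (1/p) :=
      integral_mul_le_Lp_mul_Lq_of_nonneg hpq
        (Eventually.of_forall fun x =>
          mul_nonneg (Real.rpow_nonneg (hs0 x).le _) (Real.rpow_nonneg (hr0 x).le _))
        (Eventually.of_forall fun x => hH0 x) hmemf hmemH
    have hq1 : (1-p)*q = -p := by rw [hqdef]; field_simp; ring
    have hq2 : (p-1)*q = p := by rw [hqdef]; field_simp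
    have hfq : ∀ x, (s x ^ (1-p) * r x ^ (p-1)) ^ q = s x ^ (-p) * r x ^ p := by
      intro x
      rw [Real.mul_rpow (Real.rpow_nonneg (hs0 x).le _) (Real.rpow_nonneg (hr0 x).le _),
        ← Real.rpow_mul (hs0 x).le, ← Real.rpow_mul (hr0 x).le, hq1, hq2]
    have hBq : ∫ x in K, (s x ^ (1-p) * r x ^ (p-1)) ^ q = ∫ x in K, s x ^ (-p) * r x ^ p :=
      integral_congr_ae (Eventually.of_forall fun x => hfq x)
    have h1q : 1/q = 1 - 1/p := by
      rw [hqdef]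
      field_simp
    calc (p-1) * A ≤ (p-1) * ∫ x, s x ^ (1-p-1) * (r x ^ (p-1) * u x) :=
          mul_le_mul_of_nonneg_left hAle hp1.le
      _ = ∫ x, (a x * T x + (p-1) * (s x ^ (1-p) * (r x ^ (p-1-1) * U x (g x)))) := h12
      _ ≤ c * ∫ x, (s x ^ (1-p) * r x ^ (p-1)) * H x := hF2le
      _ = c * ∫ x in K, (s x ^ (1-p) * r x ^ (p-1)) * H x := by rw [hsetI]
      _ ≤ c * ((∫ x in K, s x ^ (-p) * r x ^ p) ^ (1-1/p) * R ^ (1/p)) := by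
          apply mul_le_mul_of_nonneg_left _ hc0.le
          calc ∫ x in K, (s x ^ (1-p) * r x ^ (p-1)) * H x
              ≤ (∫ x in K, (s x ^ (1-p) * r x ^ (p-1)) ^ q) ^ (1/q)
                * (∫ x in K, H x ^ p) ^ (1/p) := holder
            _ = (∫ x in K, s x ^ (-p) * r x ^ p) ^ (1-1/p) * R ^ (1/p) := by
                rw [hBq, h1q, hRK]
  -- limit ε → 0
  have hlim : Tendsto (fun n : ℕ => ∫ x in K, s x ^ (-p) * ((1/(n+1) : ℝ) + u x) ^ p)
      atTop (𝓝 A) := by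
    rw [← hAK]
    obtain ⟨M, hM⟩ : ∃ M, ∀ x ∈ K, ‖(1 + u x) ^ p‖ ≤ M :=
      hKc.exists_bound_of_continuousOn
        ((continuous_const.add huc).rpow_const (fun x => Or.inr hp0.le)).continuousOn
    refine tendsto_integral_of_dominated_convergence (fun _ => M)
      (fun n => ((hsc.rpow_const (fun x => Or.inl (hs0 x).ne')).mul
        ((continuous_const.add huc).rpow_const
          (fun x => Or.inr hp0.le))).aestronglyMeasurable)
      (integrable_const M) (fun n => ?_) ?_
    · filter_upwards [ae_restrict_mem hKcl.measurableSet] with x hx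
      have h1 : 0 ≤ s x ^ (-p) := Real.rpow_nonneg (hs0 x).le _
      have h2 : (0:ℝ) ≤ (1/(n+1) : ℝ) + u x := add_nonneg (by positivity) (hu0 x)
      have h3 : s x ^ (-p) ≤ 1 :=
        Real.rpow_le_one_of_one_le_of_nonpos (hs1 x) (by linarith)
      have h4 : ((1/(n+1) : ℝ) + u x) ^ p ≤ (1 + u x) ^ p := by
        apply Real.rpow_le_rpow h2 _ hp0.le
        have : (1/(n+1) : ℝ) ≤ 1 := by
          rw [div_le_one (by positivity)]
          simp
        linarith
      have h5 : (0:ℝ) ≤ (1 + u x) ^ p := Real.rpow_nonneg (by linarith [hu0 x]) _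
      rw [Real.norm_eq_abs, abs_of_nonneg (mul_nonneg h1 (Real.rpow_nonneg h2 _))]
      calc s x ^ (-p) * ((1/(n+1) : ℝ) + u x) ^ p ≤ 1 * ((1 + u x) ^ p) := by
            exact mul_le_mul h3 h4 (Real.rpow_nonneg h2 _) one_pos.le
        _ = (1 + u x) ^ p := one_mul _
        _ ≤ M := by
            have := hM x hx
            rwa [Real.norm_eq_abs, abs_of_nonneg h5] at this
    · refine Eventually.of_forall (fun x => ?_)
      have h6 : Tendsto (fun n : ℕ => (1/(n+1) : ℝ) + u x) atTop (𝓝 (u x)) := by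
        have h7 := tendsto_one_div_add_atTop_nhds_zero_nat.add_const (u x)
        rwa [zero_add] at h7
      exact ((Real.continuousAt_rpow_const (u x) p (Or.inr hp0.le)).tendsto.comp h6).const_mul _
  have hfinal : (p-1) * A ≤ c * (A ^ (1-1/p) * R ^ (1/p)) := by
    have T : Tendsto (fun n : ℕ =>
        c * ((∫ x in K, s x ^ (-p) * ((1/(n+1) : ℝ) + u x) ^ p) ^ (1-1/p) * R ^ (1/p)))
        atTop (𝓝 (c * (A ^ (1-1/p) * R ^ (1/p)))) :=
      (((Real.continuousAt_rpow_const A (1-1/p)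
        (Or.inr (by have := (div_lt_one hp0).mpr hp; linarith))).tendsto.comp hlim).mul_const _).const_mul c
    exact ge_of_tendsto T (Eventually.of_forall fun n : ℕ =>
      main (1/(n+1)) (one_div_pos.mpr (Nat.cast_add_one_pos n)))
  -- conclude
  have hLHS : (∫ x, ‖gradient φ x‖ ^ (2*p) / (1 + φ x) ^ p) = A := by
    rw [hAdef]
    congr 1
    funext x
    have h1 : ‖gradient φ x‖ ^ (2*p) = u x ^ p := by
      have h0 : u x = ‖gradient φ x‖ * ‖gradient φ x‖ := real_inner_self_eq_norm_mul_norm (g x)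
      rw [h0, Real.rpow_mul (norm_nonneg _), show ((2:ℝ)) = ((2:ℕ):ℝ) from by norm_num,
        Real.rpow_natCast, pow_two]
    have h2 : (1 + φ x) ^ p = (s x) ^ p := rfl
    rw [h1, h2, Real.rpow_neg (hs0 x).le, div_eq_mul_inv, mul_comm]
  rw [hLHS]
  rcases eq_or_lt_of_le hA0 with hA | hA
  · rw [← hA]
    exact mul_nonneg (Real.rpow_pos_of_pos (div_pos hc0 hp1) p).le hR0
  · have hApow : A ^ (1-1/p) * A ^ (1/p) = A := by
      rw [← Real.rpow_add hA]; norm_num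
    have h2 : A ^ (1-1/p) * ((p-1) * A ^ (1/p)) ≤ A ^ (1-1/p) * (c * R ^ (1/p)) := by
      calc A ^ (1-1/p) * ((p-1) * A ^ (1/p)) = (p-1) * (A ^ (1-1/p) * A ^ (1/p)) := by ring
      _ = (p-1) * A := by rw [hApow]
      _ ≤ c * (A ^ (1-1/p) * R ^ (1/p)) := hfinal
      _ = A ^ (1-1/p) * (c * R ^ (1/p)) := by ring
    have hApos : 0 < A ^ (1-1/p) := Real.rpow_pos_of_pos hA _
    have h3 : (p-1) * A ^ (1/p) ≤ c * R ^ (1/p) := le_of_mul_le_mul_left h2 hApos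
    have h4 : A ^ (1/p) ≤ (c/(p-1)) * R ^ (1/p) := by
      rw [div_mul_eq_mul_div, le_div_iff₀ hp1]
      linarith [h3]
    have h5 : (A ^ (1/p)) ^ p ≤ ((c/(p-1)) * R ^ (1/p)) ^ p :=
      Real.rpow_le_rpow (Real.rpow_nonneg hA.le _) h4 hp0.le
    have h6 : (A ^ (1/p)) ^ p = A := by
      rw [← Real.rpow_mul hA.le, one_div_mul_cancel hp0.ne', Real.rpow_one]
    have h7 : ((c/(p-1)) * R ^ (1/p)) ^ p = (c/(p-1)) ^ p * R := by
      rw [Real.mul_rpow (by positivity) (Real.rpow_nonneg hR0 _),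
        ← Real.rpow_mul hR0, one_div_mul_cancel hp0.ne', Real.rpow_one]
    rw [h6, h7] at h5
    exact h5
end
end
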